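/- arXiv:1311.0987 — 3 statements merged into one kernel-verified Lean document; each statement's English description precedes it below -/
import Mathlib

section
/- Let (R, m) be a Noetherian local ring of Krull dimension one. Then there exists a positive integer c such that for every ideal I of R, the minimal number of generators v(I) of I satisfies v(I) ≤ c. -/
open IsLocalRing

/-- The length `ℓ_R(M)` of an `R`-module `M`, defined as the Krull dimension of its lattice of
submodules (the supremum of lengths of chains of submodules). -/
noncomputable def moduleLength (R M : Type) [CommRing R] [AddCommGroup M] [Module R M] : ℕ∞ :=
  WithBot.unbotD 0 (Order.krullDim (Submodule R M))

/-- `v(M) = ℓ_R(M / mM)`, the minimal number of generators of `M` (by Nakayama's lemma),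
where `m` is a given ideal of `R` (in applications, the maximal ideal of a local ring). -/
noncomputable def numGen (R : Type) [CommRing R] (m : Ideal R) (M : Type) [AddCommGroup M]
    [Module R M] : ℕ∞ :=
  moduleLength R (M ⧸ (m • (⊤ : Submodule R M)))

section Aux

set_option linter.unusedSectionVars false
set_option maxHeartbeats 1000000

variable {R : Type} [CommRing R] [IsLocalRing R]

open Ideal Submodule Order

lemma aux_span_attach (N : Ideal R) (S : Finset R) (hS : Ideal.span (S : Set R) = N) :
    ∃ T : Finset N, Submodule.span R (T : Set N) = ⊤ ∧ T.card ≤ S.card := by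
  classical
  have hmem : ∀ s ∈ S, s ∈ N := fun s hs => hS ▸ Ideal.subset_span hs
  refine ⟨S.attach.image (fun s => (⟨s.1, hmem s.1 s.2⟩ : N)), ?_, ?_⟩
  · apply Submodule.map_injective_of_injective (Submodule.injective_subtype N)
    rw [Submodule.map_span, Submodule.map_top, Submodule.range_subtype]
    have : N.subtype '' (↑(S.attach.image (fun s => (⟨s.1, hmem s.1 s.2⟩ : N)))) = (S : Set R) := by
      ext x
      constructor
      · rintro ⟨⟨v, hv⟩, hmem2, rfl⟩
        simp only [Finset.coe_image, Set.mem_image, Finset.mem_coe, Finset.mem_attach] at hmem2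
        obtain ⟨⟨s, hs⟩, _, heq⟩ := hmem2
        have : s = v := congrArg Subtype.val heq
        subst this
        exact hs
      · intro hx
        exact ⟨⟨x, hmem x hx⟩, by
          simp only [Finset.coe_image, Set.mem_image, Finset.mem_coe, Finset.mem_attach]
          exact ⟨⟨x, hx⟩, trivial, rfl⟩, rfl⟩
    rw [this]; exact hS
  · exact le_trans (Finset.card_image_le) (by simp)

lemma aux_chain_bound_quot (M : Type) [AddCommGroup M] [Module R M]
    (S : Finset M) (hspan : Submodule.span R (S : Set M) = ⊤)
    (p : LTSeries (Submodule R (M ⧸ ((IsLocalRing.maximalIdeal R) • (⊤ : Submodule R M))))) :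
    p.length ≤ S.card := by
  classical
  set k := R ⧸ (IsLocalRing.maximalIdeal R)
  set V := M ⧸ ((IsLocalRing.maximalIdeal R) • (⊤ : Submodule R M))
  letI : Field k := Ideal.Quotient.field (IsLocalRing.maximalIdeal R)
  set π : M →ₗ[R] V := ((IsLocalRing.maximalIdeal R) • (⊤ : Submodule R M)).mkQ
  -- scalar multiplication compatibility
  have smul_compat : ∀ (r : R) (v : V), (Ideal.Quotient.mk (IsLocalRing.maximalIdeal R) r) • v = r • v := by
    intro r v
    obtain ⟨m, rfl⟩ := Submodule.Quotient.mk_surjective _ v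
    rw [Module.Quotient.mk_smul_mk, Submodule.Quotient.mk_smul]
  -- the conversion of R-submodules to k-submodules
  have Fsm : ∀ (W : Submodule R V) (c : k) (v : V), v ∈ W → c • v ∈ W := by
    intro W c v hv
    obtain ⟨r, rfl⟩ := Ideal.Quotient.mk_surjective c
    rw [smul_compat]
    exact W.smul_mem r hv
  let F : Submodule R V → Submodule k V := fun W =>
    { carrier := W
      add_mem' := fun ha hb => W.add_mem ha hb
      zero_mem' := W.zero_mem
      smul_mem' := fun c v hv => Fsm W c v hv }
  have hFmem : ∀ (W : Submodule R V) (v : V), v ∈ F W ↔ v ∈ W := fun _ _ => Iff.rfl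
  have hFlt : ∀ W W' : Submodule R V, W < W' → F W < F W' := by
    intro W W' h
    rw [SetLike.lt_iff_le_and_exists] at h ⊢
    obtain ⟨hle, x, hx, hx'⟩ := h
    exact ⟨fun v hv => hle hv, x, hx, hx'⟩
  -- k-span of image of S is everything
  have hspanR : Submodule.span R (π '' (S : Set M)) = ⊤ := by
    rw [← Submodule.map_span, hspan, Submodule.map_top, Submodule.range_mkQ]
  haveI : IsScalarTower R k V := by
    constructor
    intro x y z
    obtain ⟨r, rfl⟩ := Ideal.Quotient.mk_surjective y
    show ((algebraMap R k) x * (Ideal.Quotient.mk (IsLocalRing.maximalIdeal R)) r) • z = x • (Ideal.Quotient.mk (IsLocalRing.maximalIdeal R)) r • z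
    have hx : (algebraMap R k) x = Ideal.Quotient.mk (IsLocalRing.maximalIdeal R) x := rfl
    rw [hx, ← _root_.map_mul (Ideal.Quotient.mk (IsLocalRing.maximalIdeal R)) x r, smul_compat, smul_compat, mul_smul]
  have hspank : Submodule.span k (π '' (S : Set M)) = ⊤ := by
    rw [eq_top_iff]
    intro v _
    have hv : v ∈ Submodule.span R (π '' (S : Set M)) := by rw [hspanR]; trivial
    have hle : Submodule.span R (π '' (S : Set M)) ≤
        (Submodule.span k (π '' (S : Set M))).restrictScalars R :=
      Submodule.span_le.mpr Submodule.subset_span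
    exact hle hv
  -- finite dimensionality
  haveI : Module.Finite k V :=
    ⟨Submodule.fg_def.mpr ⟨π '' (S : Set M), S.finite_toSet.image _, hspank⟩⟩
  have hrank : Module.finrank k V ≤ S.card := by
    have h2 := finrank_span_finset_le_card (R := k) (S.image π)
    rw [Finset.coe_image] at h2
    have h3 : Set.finrank k (π '' (S : Set M)) = Module.finrank k V := by
      rw [Set.finrank, hspank]
      exact finrank_top k V
    rw [h3] at h2
    exact le_trans h2 Finset.card_image_le
  have key : ∀ i : Fin (p.length + 1), (i : ℕ) ≤ Module.finrank k (F (p i)) := by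
    intro i
    induction i using Fin.induction with
    | zero => simp
    | succ j ih =>
      have hlt : F (p j.castSucc) < F (p j.succ) := hFlt _ _ (p.step j)
      have h4 := Submodule.finrank_lt_finrank_of_lt hlt
      have h5 : (j.castSucc : ℕ) = (j : ℕ) := rfl
      rw [h5] at ih
      have h6 : ((j.succ : Fin (p.length+1)) : ℕ) = (j : ℕ) + 1 := by simp
      omega
  have hlast := key (Fin.last _)
  have h7 : ((Fin.last p.length : Fin (p.length+1)) : ℕ) = p.length := rfl
  rw [h7] at hlast
  exact le_trans hlast (le_trans (Submodule.finrank_le _) hrank)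

lemma aux_split (A₀ a : Ideal R) (hA : A₀ ≤ a) (b c : ℕ)
    (hb : ∀ p : LTSeries (Ideal R), (∀ i, A₀ ≤ p i ∧ p i ≤ a) → p.length ≤ b)
    (hc : ∀ p : LTSeries (Ideal R), (∀ i, a ≤ p i) → p.length ≤ c)
    (p : LTSeries (Ideal R)) (hp : ∀ i, A₀ ≤ p i) : p.length ≤ b + c := by
  classical
  set α := {J : Ideal R // A₀ ≤ J ∧ J ≤ a}
  set β := {J : Ideal R // a ≤ J}
  have hbα : ∀ x : α, Order.height x ≤ (b : ℕ∞) := by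
    intro x
    apply Order.height_le
    intro q _
    have := hb (q.map (fun y : α => y.1) (fun _ _ h => h)) (fun i => (q i).2)
    simpa using (show q.length ≤ b from this)
  have hcβ : ∀ x : β, Order.height x ≤ (c : ℕ∞) := by
    intro x
    apply Order.height_le
    intro q _
    have := hc (q.map (fun y : β => y.1) (fun _ _ h => h)) (fun i => (q i).2)
    simpa using (show q.length ≤ c from this)
  let f : Fin (p.length + 1) → α := fun i => ⟨p i ⊓ a, le_inf (hp i) hA, inf_le_right⟩
  let g : Fin (p.length + 1) → β := fun i => ⟨p i ⊔ a, le_sup_right⟩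
  have key : ∀ i : Fin (p.length + 1),
      (i : ℕ∞) ≤ Order.height (f i) + Order.height (g i) := by
    intro i
    induction i using Fin.induction with
    | zero => simp
    | succ j ih =>
      have hstep := p.step j
      have hmonof : f j.castSucc ≤ f j.succ := inf_le_inf_right a hstep.le
      have hmonog : g j.castSucc ≤ g j.succ := sup_le_sup_right hstep.le a
      have hcast : ((j.succ : Fin (p.length+1)) : ℕ∞) = ((j.castSucc : Fin (p.length+1)) : ℕ∞) + 1 := by
        push_cast
        simp
      rw [hcast]
      by_cases hinf : p j.castSucc ⊓ a = p j.succ ⊓ a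
      · have hsup : p j.castSucc ⊔ a < p j.succ ⊔ a :=
          sup_lt_sup_of_lt_of_inf_le_inf hstep (le_of_eq hinf.symm)
        have hlt : g j.castSucc < g j.succ := hsup
        have hfin : Order.height (g j.castSucc) < ⊤ :=
          lt_of_le_of_lt (hcβ _) (by exact_mod_cast WithTop.coe_lt_top c)
        have h1 : Order.height (g j.castSucc) + 1 ≤ Order.height (g j.succ) :=
          Order.add_one_le_of_lt (Order.height_strictMono hlt hfin)
        calc ((j.castSucc : Fin (p.length+1)) : ℕ∞) + 1
            ≤ (Order.height (f j.castSucc) + Order.height (g j.castSucc)) + 1 := by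
              exact add_le_add_left ih 1
          _ = Order.height (f j.castSucc) + (Order.height (g j.castSucc) + 1) := by
              rw [add_assoc]
          _ ≤ Order.height (f j.succ) + Order.height (g j.succ) :=
              add_le_add (Order.height_mono hmonof) h1
      · have hlt : f j.castSucc < f j.succ :=
          Subtype.mk_lt_mk.mpr (lt_of_le_of_ne (inf_le_inf_right a hstep.le) hinf)
        have hfin : Order.height (f j.castSucc) < ⊤ :=
          lt_of_le_of_lt (hbα _) (by exact_mod_cast WithTop.coe_lt_top b)
        have h1 : Order.height (f j.castSucc) + 1 ≤ Order.height (f j.succ) :=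
          Order.add_one_le_of_lt (Order.height_strictMono hlt hfin)
        calc ((j.castSucc : Fin (p.length+1)) : ℕ∞) + 1
            ≤ (Order.height (f j.castSucc) + Order.height (g j.castSucc)) + 1 := by
              exact add_le_add_left ih 1
          _ = (Order.height (f j.castSucc) + 1) + Order.height (g j.castSucc) := by
              rw [add_assoc, add_comm (Order.height (g j.castSucc)) 1, ← add_assoc]
          _ ≤ Order.height (f j.succ) + Order.height (g j.succ) :=
              add_le_add h1 (Order.height_mono hmonog)
  have hfinal := key (Fin.last _)
  have h2 : ((Fin.last p.length : Fin (p.length+1)) : ℕ∞) = (p.length : ℕ∞) := by simp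
  rw [h2] at hfinal
  have h3 : (p.length : ℕ∞) ≤ ((b + c : ℕ) : ℕ∞) := by
    refine le_trans hfinal ?_
    push_cast
    exact add_le_add (hbα _) (hcβ _)
  exact_mod_cast h3

lemma aux_dec {X X' : Ideal R} (h : X < X') {n : ℕ}
    (hb : ∀ p : LTSeries (Ideal R), (∀ i, X ≤ p i) → p.length ≤ n) :
    1 ≤ n ∧ ∀ p : LTSeries (Ideal R), (∀ i, X' ≤ p i) → p.length ≤ n - 1 := by
  have hcoX : Order.coheight X ≤ (n : ℕ∞) := by
    apply Order.coheight_le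
    intro p hhead
    exact_mod_cast Nat.cast_le.mpr (hb p (fun i => hhead ▸ p.monotone (Fin.zero_le i)))
  have hcoX' : Order.coheight X' ≤ (n : ℕ∞) := by
    apply Order.coheight_le
    intro p hhead
    exact_mod_cast Nat.cast_le.mpr
      (hb p (fun i => le_trans h.le (hhead ▸ p.monotone (Fin.zero_le i))))
  have hfin : Order.coheight X' < ⊤ := lt_of_le_of_lt hcoX' (WithTop.coe_lt_top n)
  have hstrict : Order.coheight X' < Order.coheight X := Order.coheight_strictAnti h hfin
  have hlt : Order.coheight X' < (n : ℕ∞) := lt_of_lt_of_le hstrict hcoX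
  have hn : 1 ≤ n := by
    by_contra hn
    interval_cases n
    simp at hlt
  refine ⟨hn, fun p hp => ?_⟩
  have h1 : (p.length : ℕ∞) ≤ Order.coheight X' :=
    Order.length_le_coheight (hp 0)
  have h2 : (p.length : ℕ∞) < (n : ℕ∞) := lt_of_le_of_lt h1 hlt
  have h3 : p.length < n := by exact_mod_cast h2
  omega

lemma aux_interval_bound [IsNoetherianRing R] (s : ℕ) : ∃ d : ℕ, ∀ p : LTSeries (Ideal R),
    (∀ i, (IsLocalRing.maximalIdeal R) ^ (s+1) ≤ p i ∧ p i ≤ (IsLocalRing.maximalIdeal R) ^ s) →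
    p.length ≤ d := by
  classical
  set mI := IsLocalRing.maximalIdeal R with hmI
  set B : Ideal R := mI ^ s with hB
  obtain ⟨S, hS⟩ : B.FG := IsNoetherian.noetherian B
  obtain ⟨T, hT, hTcard⟩ := aux_span_attach B S hS
  refine ⟨T.card, fun p hp => ?_⟩
  set Q := (B : Type) ⧸ (mI • (⊤ : Submodule R B))
  let F : Ideal R → Submodule R Q :=
    fun J => Submodule.map (mI • (⊤ : Submodule R B)).mkQ (Submodule.comap B.subtype J)
  -- recovery on the interval
  have hrec : ∀ J : Ideal R, mI ^ (s+1) ≤ J → J ≤ B →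
      Submodule.map B.subtype (Submodule.comap (mI • (⊤ : Submodule R B)).mkQ (F J)) = J := by
    intro J h1 h2
    rw [Submodule.comap_map_mkQ, Submodule.map_sup, Submodule.map_comap_subtype,
      Submodule.map_smul'', Submodule.map_top, Submodule.range_subtype]
    have hsmul : mI • B = mI ^ (s+1) := by
      rw [smul_eq_mul, hB, ← pow_succ']
    rw [hsmul, inf_eq_right.mpr h2, sup_eq_right.mpr h1]
  have hstep : ∀ i : Fin p.length, F (p i.castSucc) < F (p i.succ) := by
    intro i
    have hlt := p.step i
    have hle : F (p i.castSucc) ≤ F (p i.succ) :=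
      Submodule.map_mono (Submodule.comap_mono hlt.le)
    refine lt_of_le_of_ne hle (fun heq => ?_)
    have := hrec (p i.castSucc) (hp i.castSucc).1 (hp i.castSucc).2
    rw [heq, hrec (p i.succ) (hp i.succ).1 (hp i.succ).2] at this
    exact absurd this (ne_of_gt hlt)
  let q : LTSeries (Submodule R Q) := ⟨p.length, fun i => F (p i), hstep⟩
  have := aux_chain_bound_quot (B : Type) T hT q
  exact this

lemma aux_above_pow_bound [IsNoetherianRing R] (s : ℕ) : ∃ a : ℕ, ∀ p : LTSeries (Ideal R),
    (∀ i, (IsLocalRing.maximalIdeal R) ^ s ≤ p i) → p.length ≤ a := by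
  induction s with
  | zero =>
    refine ⟨0, fun p hp => ?_⟩
    by_contra h
    have hl : 0 < p.length := by omega
    have h0 := p.step ⟨0, hl⟩
    have htop : ∀ i, p i = ⊤ := fun i => top_le_iff.mp (by
      have := hp i
      rwa [pow_zero, Ideal.one_eq_top] at this)
    rw [htop, htop] at h0
    exact lt_irrefl _ (show (⊤ : Ideal R) < ⊤ from h0)
  | succ s ih =>
    obtain ⟨a, ha⟩ := ih
    obtain ⟨d, hd⟩ := aux_interval_bound (R := R) s
    exact ⟨d + a, fun p hp =>
      aux_split _ _ (Ideal.pow_le_pow_right (Nat.le_succ s)) d a hd ha p hp⟩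

lemma aux_gen (Z : Ideal R) : ∀ (n : ℕ) (A B : Ideal R), A ≤ B →
    (∀ p : LTSeries (Ideal R), (∀ i, A ⊔ Z ≤ p i) → p.length ≤ n) →
    ∃ (D : Finset R) (m : ℕ), (D : Set R) ⊆ (B : Set R) ∧
      A ⊔ Ideal.span (D : Set R) ⊔ Z = B ⊔ Z ∧
      D.card + m ≤ n ∧ ∀ p : LTSeries (Ideal R), (∀ i, B ⊔ Z ≤ p i) → p.length ≤ m := by
  intro n
  induction n with
  | zero =>
    intro A B hAB hbound
    refine ⟨∅, 0, by simp, ?_, by simp, ?_⟩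
    · -- must be equal
      by_contra hne
      have hlt : A ⊔ Z < B ⊔ Z := by
        simp only [Finset.coe_empty, Ideal.span_empty, sup_bot_eq] at hne
        exact lt_of_le_of_ne (sup_le_sup_right hAB Z)
          (fun heq => hne (by rw [heq]))
      obtain ⟨hn1, _⟩ := aux_dec hlt hbound
      omega
    · intro p hp
      exact hbound p (fun i => le_trans (sup_le_sup_right hAB Z) (hp i))
  | succ n ih =>
    intro A B hAB hbound
    by_cases heq : A ⊔ Z = B ⊔ Z
    · refine ⟨∅, n + 1, by simp, by simpa using heq, by simp, ?_⟩
      intro p hp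
      exact hbound p (fun i => heq ▸ hp i)
    · have hlt : A ⊔ Z < B ⊔ Z :=
        lt_of_le_of_ne (sup_le_sup_right hAB Z) heq
      -- find b ∈ B, b ∉ A ⊔ Z
      have hex : ∃ b ∈ B, b ∉ A ⊔ Z := by
        by_contra hno
        push_neg at hno
        have : B ⊔ Z ≤ A ⊔ Z := sup_le (fun b hb => hno b hb) le_sup_right
        exact absurd (le_antisymm hlt.le this) heq
      obtain ⟨b, hbB, hbA⟩ := hex
      have hblt : A ⊔ Z < (A ⊔ Ideal.span {b}) ⊔ Z := by
        refine lt_of_le_of_ne (sup_le_sup_right le_sup_left Z) (fun heq2 => hbA ?_)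
        have hb' : b ∈ (A ⊔ Ideal.span {b}) ⊔ Z :=
          Submodule.mem_sup_left (Submodule.mem_sup_right (Ideal.subset_span rfl))
        rw [heq2]
        exact hb'
      obtain ⟨hn1, hdec⟩ := aux_dec hblt hbound
      have hA'B : A ⊔ Ideal.span {b} ≤ B :=
        sup_le hAB (Ideal.span_le.mpr (Set.singleton_subset_iff.mpr hbB))
      obtain ⟨D, m, hDsub, hDspan, hDcard, hDbound⟩ :=
        ih (A ⊔ Ideal.span {b}) B hA'B (by
          intro p hp
          have := hdec p hp
          omega)
      classical
      refine ⟨insert b D, m, ?_, ?_, ?_, hDbound⟩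
      · intro x hx
        rcases Finset.mem_insert.mp (by exact_mod_cast hx) with rfl | hxD
        · exact hbB
        · exact hDsub hxD
      · rw [Finset.coe_insert, ← Set.singleton_union, Ideal.span_union, ← hDspan]
        ac_rfl
      · have := Finset.card_insert_le b D
        omega

lemma aux_master [IsNoetherianRing R] (y : R) (hy : y ∈ IsLocalRing.maximalIdeal R) :
    ∀ (t : ℕ) (I A : Ideal R), A ≤ I →
    I.colon (Ideal.span {y ^ (t+1)}) ≤ I.colon (Ideal.span {y ^ t}) →
    ∀ n : ℕ, (∀ p : LTSeries (Ideal R), (∀ i, A ⊔ Ideal.span {y} ≤ p i) → p.length ≤ n) →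
    ∃ S : Finset R, (S : Set R) ⊆ (I : Set R) ∧ I = A ⊔ Ideal.span (S : Set R) ∧ S.card ≤ n := by
  intro t
  induction t with
  | zero =>
    intro I A hAI hstab n hbound
    obtain ⟨D, m, hDsub, hDspan, hDcard, _⟩ := aux_gen (Ideal.span {y}) n A I hAI hbound
    -- I₁ = I
    have hI₁ : I.colon (Ideal.span {y}) ≤ I := by
      intro r hr
      have h1 : r ∈ I.colon (Ideal.span {y ^ (0+1)}) := by
        rwa [zero_add, pow_one]
      have h2 := hstab h1
      rwa [pow_zero, Ideal.mem_colon_span_singleton, mul_one] at h2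
    -- decomposition
    have hdecomp : I ≤ (A ⊔ Ideal.span (D : Set R)) ⊔ Ideal.span {y} • I := by
      intro x hx
      have hx' : x ∈ A ⊔ Ideal.span (D : Set R) ⊔ Ideal.span {y} := by
        rw [hDspan]; exact Submodule.mem_sup_left hx
      obtain ⟨a, ha, z, hz, rfl⟩ := Submodule.mem_sup.mp hx'
      obtain ⟨c, rfl⟩ := Ideal.mem_span_singleton'.mp hz
      have haI : a ∈ I := by
        refine (sup_le hAI (Ideal.span_le.mpr hDsub) : A ⊔ Ideal.span (D : Set R) ≤ I) ha
      have hcyI : c * y ∈ I := by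
        have : a + c * y ∈ I := hx
        have := I.sub_mem this haI
        simpa using this
      have hc : c ∈ I.colon (Ideal.span {y}) := Ideal.mem_colon_span_singleton.mpr hcyI
      refine Submodule.add_mem _ (Submodule.mem_sup_left ha) (Submodule.mem_sup_right ?_)
      have : y • c ∈ Ideal.span {y} • I.colon (Ideal.span {y}) :=
        Submodule.smul_mem_smul (Ideal.subset_span rfl) hc
      have hySI : Ideal.span {y} • I.colon (Ideal.span {y}) ≤ Ideal.span {y} • I :=
        smul_mono_right _ hI₁
      have h9 := hySI this
      have h7 : c * y = y • c := by rw [smul_eq_mul, mul_comm]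
      rw [h7]
      exact h9
    -- Nakayama
    have hNak : I ≤ A ⊔ Ideal.span (D : Set R) := by
      refine Submodule.le_of_le_smul_of_le_jacobson_bot (IsNoetherian.noetherian I) ?_ hdecomp
      rw [IsLocalRing.jacobson_eq_maximalIdeal ⊥ bot_ne_top]
      exact Ideal.span_le.mpr (Set.singleton_subset_iff.mpr hy)
    refine ⟨D, hDsub, le_antisymm hNak (sup_le hAI (Ideal.span_le.mpr hDsub)), by omega⟩
  | succ t ih =>
    intro I A hAI hstab n hbound
    obtain ⟨D, m, hDsub, hDspan, hDcard, hDbound⟩ := aux_gen (Ideal.span {y}) n A I hAI hbound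
    set I₁ := I.colon (Ideal.span {y}) with hI₁def
    have hcolon_ext : ∀ (J : Ideal R) (k : ℕ),
        (J.colon (Ideal.span {y})).colon (Ideal.span {y ^ k}) = J.colon (Ideal.span {y ^ (k+1)}) := by
      intro J k
      ext r
      rw [Ideal.mem_colon_span_singleton, Ideal.mem_colon_span_singleton, Ideal.mem_colon_span_singleton,
        pow_succ, ← mul_assoc]
    have hstab₁ : I₁.colon (Ideal.span {y ^ (t+1)}) ≤ I₁.colon (Ideal.span {y ^ t}) := by
      rw [hI₁def, hcolon_ext, hcolon_ext]
      exact hstab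
    have hIleI₁ : I ≤ I₁ := by
      intro r hr
      exact Ideal.mem_colon_span_singleton.mpr (Ideal.mul_mem_right y I hr)
    have hA' : A ⊔ Ideal.span (D : Set R) ≤ I₁ :=
      le_trans (sup_le hAI (Ideal.span_le.mpr hDsub)) hIleI₁
    obtain ⟨S₁, hS₁sub, hS₁span, hS₁card⟩ := ih I₁ (A ⊔ Ideal.span (D : Set R)) hA' hstab₁ m
      (by
        intro p hp
        apply hDbound p
        intro i
        have := hp i
        rwa [← hDspan])
    classical
    have hSsub : ((D ∪ S₁.image (fun s => y * s) : Finset R) : Set R) ⊆ (I : Set R) := by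
      intro x hx
      rcases Finset.mem_union.mp (by exact_mod_cast hx) with hxD | hxI
      · exact hDsub hxD
      · obtain ⟨s, hs, rfl⟩ := Finset.mem_image.mp hxI
        have hsI₁ : s ∈ I₁ := hS₁sub hs
        have := Ideal.mem_colon_span_singleton.mp hsI₁
        rwa [mul_comm] at this
    refine ⟨D ∪ S₁.image (fun s => y * s), hSsub, ?_, ?_⟩
    · -- spanning
      have himg : Ideal.span {y} • Ideal.span ((S₁ : Set R)) ≤
          Ideal.span ((S₁.image (fun s => y * s) : Finset R) : Set R) := by
        refine Submodule.smul_le.mpr ?_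
        intro r hr x hx
        obtain ⟨c, rfl⟩ := Ideal.mem_span_singleton'.mp hr
        have hyx : y * x ∈ Ideal.span ((S₁.image (fun s => y * s) : Finset R) : Set R) := by
          have hmap := Submodule.map_span (LinearMap.lsmul R R y) (S₁ : Set R)
          have hx' : y • x ∈ Submodule.map (LinearMap.lsmul R R y) (Submodule.span R (S₁ : Set R)) :=
            ⟨x, hx, rfl⟩
          rw [hmap] at hx'
          show y * x ∈ Submodule.span R ((S₁.image (fun s => y * s) : Finset R) : Set R)
          rw [← smul_eq_mul]
          refine Submodule.span_mono ?_ hx'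
          rw [Finset.coe_image]
          intro z hz
          obtain ⟨w, hw, rfl⟩ := hz
          exact ⟨w, hw, by simp [smul_eq_mul]⟩
        have hcy : (c * y) • x = c • (y * x) := by
          rw [smul_eq_mul, smul_eq_mul, mul_assoc]
        rw [hcy]
        exact Ideal.mul_mem_left _ c hyx
      have hdecomp : I ≤ (A ⊔ Ideal.span (D : Set R)) ⊔ Ideal.span {y} • I₁ := by
        intro x hx
        have hx' : x ∈ A ⊔ Ideal.span (D : Set R) ⊔ Ideal.span {y} := by
          rw [hDspan]; exact Submodule.mem_sup_left hx
        obtain ⟨a, ha, z, hz, rfl⟩ := Submodule.mem_sup.mp hx'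
        obtain ⟨c, rfl⟩ := Ideal.mem_span_singleton'.mp hz
        have haI : a ∈ I := (sup_le hAI (Ideal.span_le.mpr hDsub) : _ ≤ I) ha
        have hcyI : c * y ∈ I := by
          have := I.sub_mem hx haI
          simpa using this
        have hc : c ∈ I₁ := Ideal.mem_colon_span_singleton.mpr hcyI
        refine Submodule.add_mem _ (Submodule.mem_sup_left ha) (Submodule.mem_sup_right ?_)
        have h9 : y • c ∈ Ideal.span {y} • I₁ :=
          Submodule.smul_mem_smul (Ideal.subset_span rfl) hc
        have h7 : c * y = y • c := by rw [smul_eq_mul, mul_comm]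
        rw [h7]
        exact h9
      have hsmulA' : Ideal.span {y} • (A ⊔ Ideal.span (D : Set R)) ≤ A ⊔ Ideal.span (D : Set R) := by
        refine Submodule.smul_le.mpr ?_
        intro r hr x hx
        rw [smul_eq_mul]
        exact Ideal.mul_mem_left _ r hx
      apply le_antisymm
      · refine le_trans hdecomp ?_
        have h8 : Ideal.span {y} • I₁ ≤ (A ⊔ Ideal.span (D : Set R)) ⊔
            Ideal.span ((S₁.image (fun s => y * s) : Finset R) : Set R) := by
          rw [hS₁span, Submodule.smul_sup]
          exact sup_le (le_trans hsmulA' le_sup_left) (le_trans himg le_sup_right)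
        refine le_trans (sup_le_sup_left h8 _) ?_
        rw [← sup_assoc, sup_idem, Finset.coe_union, Ideal.span_union, sup_assoc]
      · exact sup_le hAI (Ideal.span_le.mpr hSsub)
    · have h1 := Finset.card_union_le D (S₁.image (fun s => y * s))
      have h2 := Finset.card_image_le (f := fun s => y * s) (s := S₁)
      omega

lemma aux_param [IsNoetherianRing R] (hdim : ringKrullDim R = 1) :
    ∃ y ∈ IsLocalRing.maximalIdeal R, ∃ s : ℕ,
      (IsLocalRing.maximalIdeal R) ^ s ≤ Ideal.span {y} := by
  classical
  set mI := IsLocalRing.maximalIdeal R with hmIdef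
  -- the maximal ideal is not a minimal prime
  have hm_not_min : mI ∉ minimalPrimes R := by
    intro hmin
    have hsub : Subsingleton (PrimeSpectrum R) := by
      constructor
      intro p q
      have hp : p.asIdeal = mI := by
        refine le_antisymm (IsLocalRing.le_maximalIdeal p.isPrime.ne_top) ?_
        exact hmin.2 ⟨p.isPrime, bot_le⟩ (IsLocalRing.le_maximalIdeal p.isPrime.ne_top)
      have hq : q.asIdeal = mI := by
        refine le_antisymm (IsLocalRing.le_maximalIdeal q.isPrime.ne_top) ?_
        exact hmin.2 ⟨q.isPrime, bot_le⟩ (IsLocalRing.le_maximalIdeal q.isPrime.ne_top)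
      exact PrimeSpectrum.ext (hp.trans hq.symm)
    have := Order.krullDim_nonpos_of_subsingleton (α := PrimeSpectrum R)
    rw [show Order.krullDim (PrimeSpectrum R) = ringKrullDim R from rfl, hdim] at this
    norm_num at this
  -- prime avoidance
  have hfin := minimalPrimes.finite_of_isNoetherianRing R
  have havoid : ∃ y ∈ mI, ∀ p ∈ minimalPrimes R, y ∉ p := by
    by_contra hno
    push_neg at hno
    have hsubset : (mI : Set R) ⊆ ⋃ p ∈ (hfin.toFinset : Set (Ideal R)), (id p : Ideal R) := by
      intro y hy
      obtain ⟨p, hp, hyp⟩ := hno y hy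
      exact Set.mem_biUnion (by simpa using hp) hyp
    have hprime : ∀ p ∈ hfin.toFinset, p ≠ (⊥ : Ideal R) → p ≠ (⊥ : Ideal R) →
        Ideal.IsPrime (id p) := by
      intro p hp _ _
      exact ((hfin.mem_toFinset.mp hp).1.1)
    obtain ⟨p, hpmem, hple⟩ := (Ideal.subset_union_prime (⊥ : Ideal R) (⊥ : Ideal R) hprime).mp
      hsubset
    have hpmin : p ∈ minimalPrimes R := hfin.mem_toFinset.mp hpmem
    have : mI = p := le_antisymm hple (IsLocalRing.le_maximalIdeal hpmin.1.1.ne_top)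
    exact hm_not_min (this ▸ hpmin)
  obtain ⟨y, hy, hyavoid⟩ := havoid
  refine ⟨y, hy, ?_⟩
  -- radical of (y) is the maximal ideal
  have hradset : {J : Ideal R | Ideal.span {y} ≤ J ∧ J.IsPrime} = {mI} := by
    ext J
    simp only [Set.mem_setOf_eq, Set.mem_singleton_iff]
    constructor
    · rintro ⟨hJy, hJprime⟩
      by_contra hne
      have hJm : J < mI :=
        lt_of_le_of_ne (IsLocalRing.le_maximalIdeal hJprime.ne_top) hne
      obtain ⟨q, hqmin, hqJ⟩ := Ideal.exists_minimalPrimes_le (bot_le (a := J))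
      have hqJ' : q < J := by
        refine lt_of_le_of_ne hqJ (fun heq => ?_)
        have : y ∈ q := heq ▸ hJy (Ideal.subset_span rfl)
        exact hyavoid q hqmin this
      -- build a chain of primes of length 2
      haveI := hJprime
      haveI : q.IsPrime := hqmin.1.1
      let x0 : PrimeSpectrum R := ⟨q, hqmin.1.1⟩
      let x1 : PrimeSpectrum R := ⟨J, hJprime⟩
      let x2 : PrimeSpectrum R := ⟨mI, inferInstance⟩
      have h01 : x0 < x1 := hqJ'
      have h12 : x1 < x2 := hJm
      let c : LTSeries (PrimeSpectrum R) :=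
        ((RelSeries.singleton _ x2).cons x1 (by simpa using h12)).cons x0 (by simpa using h01)
      have hlen := Order.LTSeries.length_le_krullDim c
      rw [show Order.krullDim (PrimeSpectrum R) = ringKrullDim R from rfl, hdim] at hlen
      have : c.length = 2 := rfl
      rw [this] at hlen
      norm_num at hlen
    · rintro rfl
      exact ⟨Ideal.span_le.mpr (Set.singleton_subset_iff.mpr hy), inferInstance⟩
  have hrad : (Ideal.span {y}).radical = mI := by
    rw [Ideal.radical_eq_sInf, hradset, sInf_singleton]
  obtain ⟨s, hs⟩ := Ideal.exists_radical_pow_le_of_fg (Ideal.span {y})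
    (hrad ▸ IsNoetherian.noetherian mI)
  exact ⟨s, hrad ▸ hs⟩

lemma aux_numGen_le (I : Ideal R) (S : Finset R) (hS : Ideal.span (S : Set R) = I) :
    numGen R (maximalIdeal R) I ≤ (S.card : ℕ∞) := by
  obtain ⟨T, hT, hTcard⟩ := aux_span_attach I S hS
  have hkd : Order.krullDim (Submodule R ((I : Type) ⧸ ((maximalIdeal R) • (⊤ : Submodule R I))))
      ≤ ((T.card : ℕ∞) : WithBot ℕ∞) := by
    rw [Order.krullDim]
    refine iSup_le (fun p => ?_)
    have := aux_chain_bound_quot (I : Type) T hT p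
    exact_mod_cast this
  show WithBot.unbotD 0 (Order.krullDim (Submodule R ((I : Type) ⧸
      ((maximalIdeal R) • (⊤ : Submodule R I))))) ≤ (S.card : ℕ∞)
  rcases h : Order.krullDim (Submodule R ((I : Type) ⧸
      ((maximalIdeal R) • (⊤ : Submodule R I)))) with _ | v
  · exact zero_le
  · rw [h] at hkd
    have hv : v ≤ (T.card : ℕ∞) := by
      rwa [← WithBot.coe_le_coe]
    show v ≤ (S.card : ℕ∞)
    exact le_trans hv (by exact_mod_cast hTcard)

end Aux

/-- If `(R, m)` is a Noetherian local ring of Krull dimension one, then there is a positive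
integer `c` such that every ideal `I` of `R` has minimal number of generators at most `c`. -/
theorem stmt_0 (R : Type) [CommRing R] [IsNoetherianRing R] [IsLocalRing R]
    (hdim : ringKrullDim R = 1) :
    ∃ c : ℕ, 0 < c ∧ ∀ I : Ideal R, numGen R (maximalIdeal R) I ≤ (c : ℕ∞) := by
  obtain ⟨y, hy, s, hpow⟩ := aux_param hdim
  obtain ⟨a, ha⟩ := aux_above_pow_bound (R := R) s
  refine ⟨max 1 a, lt_of_lt_of_le one_pos (le_max_left _ _), fun I => ?_⟩
  -- stabilization of the colon chain
  have hmono : Monotone (fun k => I.colon (Ideal.span {y ^ k})) := by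
    intro i j hij
    intro r hr
    rw [Ideal.mem_colon_span_singleton] at hr ⊢
    obtain ⟨d, rfl⟩ := Nat.exists_eq_add_of_le hij
    rw [pow_add, ← mul_assoc]
    exact Ideal.mul_mem_right _ _ hr
  obtain ⟨t, ht⟩ := monotone_stabilizes_iff_noetherian.mpr
    (inferInstance : IsNoetherian R R) ⟨fun k => I.colon (Ideal.span {y ^ k}), hmono⟩
  have hstab : I.colon (Ideal.span {y ^ (t+1)}) ≤ I.colon (Ideal.span {y ^ t}) :=
    le_of_eq (ht (t+1) (Nat.le_succ t)).symm
  obtain ⟨S, hSsub, hSspan, hScard⟩ := aux_master y hy t I ⊥ bot_le hstab a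
    (fun p hp => ha p (fun i => le_trans hpow (le_trans le_sup_right (hp i))))
  have hspan : Ideal.span (S : Set R) = I := by
    rw [hSspan, bot_sup_eq]
  calc numGen R (maximalIdeal R) I ≤ (S.card : ℕ∞) := aux_numGen_le I S hspan
    _ ≤ ((max 1 a : ℕ) : ℕ∞) := by
        exact_mod_cast le_trans hScard (le_max_right 1 a)
end

section
/- Let (R, m) be a Noetherian local ring and M a finitely generated R-module of dimension at most one. Then c(M) = sup { ℓ_R((N :_M m)/N) : N an R-submodule of M }, where (N :_M m) = { x ∈ M : m·x ⊆ N }. -/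
open IsLocalRing

/-- The colon submodule `(N :_M I) = { x ∈ M | I • x ⊆ N }`. -/
def colonSub {R M : Type} [CommRing R] [AddCommGroup M] [Module R M] (N : Submodule R M)
    (I : Ideal R) : Submodule R M where
  carrier := { x | ∀ r ∈ I, r • x ∈ N }
  add_mem' := by
    intro a b ha hb r hr
    simpa [smul_add] using N.add_mem (ha r hr) (hb r hr)
  zero_mem' := by
    intro r hr
    simp
  smul_mem' := by
    intro c x hx r hr
    rw [smul_comm]
    exact N.smul_mem c (hx r hr)

/-- `ℓ_R((N :_M m)/N)`, the length of the quotient of the colon submodule `(N :_M m)` by `N`. -/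
noncomputable def colonQuotLen (R : Type) [CommRing R] (m : Ideal R) (M : Type) [AddCommGroup M]
    [Module R M] (N : Submodule R M) : ℕ∞ :=
  moduleLength R (↥(colonSub N m) ⧸ Submodule.comap (colonSub N m).subtype N)

private lemma unbot'_mono {a b : WithBot ℕ∞} (h : a ≤ b) : WithBot.unbotD 0 a ≤ WithBot.unbotD 0 b := by
  cases a with
  | bot => simp
  | coe x =>
    cases b with
    | bot => simp at h
    | coe y => simpa using h

/-- Length is monotone under injective linear maps. -/
private lemma moduleLength_le_of_injective {R M N : Type} [CommRing R] [AddCommGroup M]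
    [Module R M] [AddCommGroup N] [Module R N] (f : M →ₗ[R] N) (hf : Function.Injective f) :
    moduleLength R M ≤ moduleLength R N :=
  unbot'_mono (Order.krullDim_le_of_strictMono (Submodule.map f)
    (Submodule.map_strictMono_of_injective hf))

/-- Length is antitone under surjective linear maps. -/
private lemma moduleLength_le_of_surjective {R M N : Type} [CommRing R] [AddCommGroup M]
    [Module R M] [AddCommGroup N] [Module R N] (f : M →ₗ[R] N) (hf : Function.Surjective f) :
    moduleLength R N ≤ moduleLength R M :=
  unbot'_mono (Order.krullDim_le_of_strictMono (Submodule.comap f)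
    (Submodule.comap_strictMono_of_surjective hf))

private lemma moduleLength_congr {R M N : Type} [CommRing R] [AddCommGroup M]
    [Module R M] [AddCommGroup N] [Module R N] (e : M ≃ₗ[R] N) :
    moduleLength R M = moduleLength R N :=
  le_antisymm (moduleLength_le_of_injective e.toLinearMap e.injective)
    (moduleLength_le_of_injective e.symm.toLinearMap e.symm.injective)

/-- If `A ≤ B` in `M`, then `A / (P ∩ A)` injects into `B / (P ∩ B)`. -/
private lemma quot_le_quot {R M : Type} [CommRing R] [AddCommGroup M] [Module R M]
    (A B P : Submodule R M) (hAB : A ≤ B) :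
    moduleLength R (↥A ⧸ Submodule.comap A.subtype P) ≤
      moduleLength R (↥B ⧸ Submodule.comap B.subtype P) := by
  have hle : Submodule.comap A.subtype P ≤
      Submodule.comap (Submodule.inclusion hAB) (Submodule.comap B.subtype P) := by
    intro x hx
    simpa using hx
  refine moduleLength_le_of_injective
    (Submodule.mapQ _ _ (Submodule.inclusion hAB) hle) ?_
  rw [← LinearMap.ker_eq_bot]
  rw [Submodule.mapQ]
  apply Submodule.ker_liftQ_eq_bot
  intro x hx
  simp only [LinearMap.mem_ker, LinearMap.coe_comp, Function.comp_apply,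
    Submodule.mkQ_apply, Submodule.Quotient.mk_eq_zero, Submodule.mem_comap] at hx ⊢
  exact hx

/-- For a finitely generated module `M` of dimension at most one over a Noetherian local ring
`(R, m)`, the invariant `c(M) = sup { v(N) | N ⊆ M }` equals
`sup { ℓ_R((N :_M m)/N) | N ⊆ M }`. -/
theorem stmt_2 (R : Type) [CommRing R] [IsNoetherianRing R] [IsLocalRing R]
    (M : Type) [AddCommGroup M] [Module R M] [Module.Finite R M]
    (hdim : ringKrullDim (R ⧸ Module.annihilator R M) ≤ 1) :
    (⨆ N : Submodule R M, numGen R (maximalIdeal R) N) =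
      ⨆ N : Submodule R M, colonQuotLen R (maximalIdeal R) M N := by
  set m := maximalIdeal R
  apply le_antisymm
  · apply iSup_le
    intro N
    refine le_trans ?_ (le_iSup (fun N => colonQuotLen R m M N) (m • N))
    -- numGen R m N ≤ colonQuotLen R m M (m • N)
    have hcomap : Submodule.comap N.subtype (m • N) = m • (⊤ : Submodule R ↥N) := by
      have h1 : m • N = Submodule.map N.subtype (m • (⊤ : Submodule R ↥N)) := by
        rw [Submodule.map_smul'', Submodule.map_top, Submodule.range_subtype]
      rw [h1, Submodule.comap_map_eq_of_injective N.injective_subtype]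
    have hNT : N ≤ colonSub (m • N) m := by
      intro x hx r hr
      exact Submodule.smul_mem_smul hr hx
    calc numGen R m ↥N
        = moduleLength R (↥N ⧸ Submodule.comap N.subtype (m • N)) := by
          unfold numGen
          rw [hcomap]
      _ ≤ moduleLength R (↥(colonSub (m • N) m) ⧸
            Submodule.comap (colonSub (m • N) m).subtype (m • N)) :=
          quot_le_quot N (colonSub (m • N) m) (m • N) hNT
      _ = colonQuotLen R m M (m • N) := rfl
  · apply iSup_le
    intro N
    set T := colonSub N m with hT
    refine le_trans ?_ (le_iSup (fun N : Submodule R M => numGen R m ↥N) T)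
    -- colonQuotLen R m M N ≤ numGen R m T
    have hle : m • (⊤ : Submodule R ↥T) ≤ Submodule.comap T.subtype N := by
      rw [Submodule.smul_le]
      intro r hr x _
      simpa using x.2 r hr
    refine moduleLength_le_of_surjective
      (Submodule.mapQ _ _ LinearMap.id (by simpa using hle)) ?_
    intro y
    obtain ⟨x, rfl⟩ := Submodule.mkQ_surjective _ y
    exact ⟨Submodule.Quotient.mk x, by simp [Submodule.mapQ_apply]⟩
end

section
/- Let R be a commutative ring and let E, F, I be R-modules such that E is finitely generated over the Noetherian ring R and I is injective. Then there is an R-module isomorphism Hom_R(Hom_R(E, F), I) ≅ E ⊗_R Hom_R(F, I). -/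
open TensorProduct

variable {R : Type} [CommRing R] {F I : Type} [AddCommGroup F] [Module R F]
  [AddCommGroup I] [Module R I]

noncomputable def theta (F I : Type) [AddCommGroup F] [Module R F]
    [AddCommGroup I] [Module R I] (M : Type) [AddCommGroup M] [Module R M] :
    M ⊗[R] (F →ₗ[R] I) →ₗ[R] ((M →ₗ[R] F) →ₗ[R] I) :=
  TensorProduct.lift
    (LinearMap.mk₂ R (fun e g => g ∘ₗ LinearMap.applyₗ (R := R) e)
      (fun e e' g => by ext φ; simp)
      (fun c e g => by ext φ; simp)
      (fun e g g' => by ext φ; simp)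
      (fun c e g => by ext φ; simp))

@[simp] lemma theta_tmul (M : Type) [AddCommGroup M] [Module R M] (e : M)
    (g : F →ₗ[R] I) (φ : M →ₗ[R] F) :
    theta F I M (e ⊗ₜ[R] g) φ = g (φ e) := rfl

/-- `σ i y` is the linear map `x ↦ x i • y`. -/
noncomputable def sigma (n : ℕ) (i : Fin n) : F →ₗ[R] ((Fin n → R) →ₗ[R] F) where
  toFun y := LinearMap.smulRight (LinearMap.proj i) y
  map_add' y z := by ext x; simp
  map_smul' c y := by
    ext x
    simp only [LinearMap.smulRight_apply, LinearMap.proj_apply, LinearMap.smul_apply,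
      RingHom.id_apply]
    exact smul_comm _ _ _

noncomputable def psi (n : ℕ) :
    (((Fin n → R) →ₗ[R] F) →ₗ[R] I) →ₗ[R] (Fin n → R) ⊗[R] (F →ₗ[R] I) :=
  ∑ i : Fin n, (TensorProduct.mk R (Fin n → R) (F →ₗ[R] I) (Pi.single i 1)) ∘ₗ
    LinearMap.lcomp R I (sigma n i)

lemma theta_bij_free (n : ℕ) :
    Function.Bijective (theta (R := R) F I (Fin n → R)) := by
  have h1 : (theta F I (Fin n → R)) ∘ₗ psi n = LinearMap.id := by
    refine LinearMap.ext fun Φ => LinearMap.ext fun φ => ?_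
    have hφ : ∑ i, sigma n i (φ (Pi.single i 1)) = φ := by
      refine LinearMap.ext fun x => ?_
      simp only [LinearMap.coe_sum, Finset.sum_apply, sigma, LinearMap.coe_mk, AddHom.coe_mk,
        LinearMap.smulRight_apply, LinearMap.proj_apply]
      calc ∑ i, x i • φ (Pi.single i 1) = ∑ i, φ (x i • (Pi.single i 1 : Fin n → R)) := by
            simp_rw [map_smul]
        _ = φ (∑ i, x i • (Pi.single i 1 : Fin n → R)) := (map_sum φ _ _).symm
        _ = φ x := by
            congr 1
            calc ∑ i, x i • (Pi.single i 1 : Fin n → R) = ∑ i, (Pi.single i (x i) : Fin n → R) := by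
                  refine Finset.sum_congr rfl fun i _ => ?_
                  rw [← Pi.single_smul, smul_eq_mul, mul_one]
              _ = x := Finset.univ_sum_single x
    calc (theta F I (Fin n → R)) (psi n Φ) φ
        = ∑ i, Φ (sigma n i (φ (Pi.single i 1))) := by
          simp only [psi, LinearMap.sum_apply, LinearMap.coe_comp, Function.comp_apply,
            TensorProduct.mk_apply, LinearMap.lcomp_apply, map_sum, theta_tmul]
      _ = Φ (∑ i, sigma n i (φ (Pi.single i 1))) := (map_sum Φ _ _).symm
      _ = Φ φ := by rw [hφ]
  have h2 : psi n ∘ₗ (theta F I (Fin n → R)) = LinearMap.id := by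
    apply TensorProduct.ext'
    intro e g
    simp only [LinearMap.coe_comp, Function.comp_apply, LinearMap.id_coe, id_eq, psi,
      LinearMap.sum_apply, LinearMap.lcomp_apply, TensorProduct.mk_apply]
    have key : ∀ i : Fin n, (theta F I (Fin n → R) (e ⊗ₜ[R] g)) ∘ₗ sigma n i = e i • g := by
      intro i
      ext y
      simp [sigma]
    calc ∑ i, Pi.single i (1:R) ⊗ₜ[R] ((theta F I (Fin n → R) (e ⊗ₜ[R] g)) ∘ₗ sigma n i)
        = ∑ i, Pi.single i (1:R) ⊗ₜ[R] (e i • g) := by simp_rw [key]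
      _ = ∑ i, (Pi.single i (e i)) ⊗ₜ[R] g := by
          refine Finset.sum_congr rfl fun i _ => ?_
          rw [TensorProduct.tmul_smul, TensorProduct.smul_tmul', ← Pi.single_smul,
            smul_eq_mul, mul_one]
      _ = (∑ i, Pi.single i (e i)) ⊗ₜ[R] g := by rw [TensorProduct.sum_tmul]
      _ = e ⊗ₜ[R] g := by rw [Finset.univ_sum_single]
  refine Function.bijective_iff_has_inverse.mpr ⟨psi n, fun t => ?_, fun Φ => ?_⟩
  · simpa using LinearMap.congr_fun h2 t
  · simpa using LinearMap.congr_fun h1 Φ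

/-- If `I` is injective and `Ψ : A → I` kills the kernel of `p : A → B`, then `Ψ` factors
through `p`. -/
lemma injective_factor (hI : Module.Injective R I) {A B : Type}
    [AddCommGroup A] [Module R A] [AddCommGroup B] [Module R B]
    (p : A →ₗ[R] B) (Ψ : A →ₗ[R] I) (h : ∀ a, p a = 0 → Ψ a = 0) :
    ∃ χ : B →ₗ[R] I, ∀ a, χ (p a) = Ψ a := by
  have hker : LinearMap.ker p ≤ LinearMap.ker Ψ := fun a ha => h a ha
  set χ₀ : LinearMap.range p →ₗ[R] I :=
    (Submodule.liftQ _ Ψ hker) ∘ₗ (LinearMap.quotKerEquivRange p).symm.toLinearMap with hχ₀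
  obtain ⟨χ, hχ⟩ := hI.out (LinearMap.range p).subtype Subtype.val_injective χ₀
  refine ⟨χ, fun a => ?_⟩
  have h1 : χ (p a) = χ₀ ⟨p a, LinearMap.mem_range_self p a⟩ := hχ ⟨p a, LinearMap.mem_range_self p a⟩
  rw [h1, hχ₀]
  simp only [LinearMap.coe_comp, LinearEquiv.coe_coe, Function.comp_apply]
  rw [LinearMap.quotKerEquivRange_symm_apply_image]
  simp [Submodule.mkQ_apply, Submodule.liftQ_apply]


/-- Let `R` be a Noetherian commutative ring and let `E, F, I` be `R`-modules with `E` finitely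
generated and `I` injective. Then `Hom_R(Hom_R(E, F), I) ≅ E ⊗_R Hom_R(F, I)`. -/
theorem stmt_7 (R : Type) [CommRing R] [IsNoetherianRing R]
    (E F I : Type) [AddCommGroup E] [Module R E] [AddCommGroup F] [Module R F]
    [AddCommGroup I] [Module R I]
    [Module.Finite R E] (hI : Module.Injective R I) :
    Nonempty (((E →ₗ[R] F) →ₗ[R] I) ≃ₗ[R] E ⊗[R] (F →ₗ[R] I)) := by
  classical
  obtain ⟨n, v, hv⟩ := @Module.Finite.exists_fin R E _ _ _ _
  set π : (Fin n → R) →ₗ[R] E := Fintype.linearCombination R v with hπdef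
  have hπ : Function.Surjective π := by
    rw [← LinearMap.range_eq_top, hπdef, Fintype.range_linearCombination, hv]
  obtain ⟨m, w, hw⟩ := Submodule.fg_iff_exists_fin_generating_family.mp
    (IsNoetherian.noetherian (LinearMap.ker π))
  set f : (Fin m → R) →ₗ[R] (Fin n → R) := Fintype.linearCombination R w with hfdef
  have hf : LinearMap.range f = LinearMap.ker π := by
    rw [hfdef, Fintype.range_linearCombination, hw]
  -- naturality of theta
  have nat : ∀ {M N : Type} [AddCommGroup M] [Module R M] [AddCommGroup N] [Module R N]
      (g : M →ₗ[R] N) (t : M ⊗[R] (F →ₗ[R] I)) (φ : N →ₗ[R] F),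
      theta (R := R) F I N (LinearMap.rTensor (F →ₗ[R] I) g t) φ = theta (R := R) F I M t (φ ∘ₗ g) := by
    intro M N _ _ _ _ g t φ
    induction t with
    | zero => simp
    | tmul e h => simp
    | add x y hx hy => simp [hx, hy]
  -- surjectivity of theta E
  have hsurj : Function.Surjective (theta (R := R) F I E) := by
    intro Φ
    have hj : ∀ ψ : E →ₗ[R] F, (ψ ∘ₗ π : (Fin n → R) →ₗ[R] F) = 0 → ψ = 0 := by
      intro ψ hψ
      refine LinearMap.ext fun e => ?_
      obtain ⟨x, rfl⟩ := hπ e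
      exact LinearMap.congr_fun hψ x
    obtain ⟨Ψ, hΨ⟩ := injective_factor hI (LinearMap.lcomp R F π) Φ
      (fun ψ hψ => by rw [hj ψ hψ, map_zero])
    obtain ⟨s, hs⟩ := (theta_bij_free (R := R) (F := F) (I := I) n).2 Ψ
    refine ⟨LinearMap.rTensor (F →ₗ[R] I) π s, LinearMap.ext fun ψ => ?_⟩
    rw [nat π s ψ, hs]
    exact hΨ ψ
  -- injectivity of theta E
  have hinj : Function.Injective (theta (R := R) F I E) := by
    rw [injective_iff_map_eq_zero]
    intro t ht
    obtain ⟨s, rfl⟩ := LinearMap.rTensor_surjective (F →ₗ[R] I) hπ t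
    have hΨ0 : ∀ ψ : E →ₗ[R] F, theta (R := R) F I (Fin n → R) s (ψ ∘ₗ π) = 0 := by
      intro ψ
      rw [← nat π s ψ, ht]
      rfl
    -- theta s kills the kernel of precomposition with f
    have hker : ∀ φ : (Fin n → R) →ₗ[R] F, (φ ∘ₗ f : (Fin m → R) →ₗ[R] F) = 0 →
        theta (R := R) F I (Fin n → R) s φ = 0 := by
      intro φ hφ
      -- φ kills ker π, hence factors through π
      have hkφ : LinearMap.ker π ≤ LinearMap.ker φ := by
        intro x hx
        rw [← hf] at hx
        obtain ⟨y, rfl⟩ := hx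
        exact LinearMap.congr_fun hφ y
      set eqv := LinearMap.quotKerEquivOfSurjective π hπ with heqv
      set ψ : E →ₗ[R] F := (Submodule.liftQ _ φ hkφ) ∘ₗ eqv.symm.toLinearMap with hψdef
      have hfac : (ψ ∘ₗ π : (Fin n → R) →ₗ[R] F) = φ := by
        refine LinearMap.ext fun x => ?_
        have hmk : eqv.symm (π x) = Submodule.Quotient.mk x := by
          apply eqv.injective
          rw [eqv.apply_symm_apply]
          rfl
        simp only [hψdef, LinearMap.coe_comp, Function.comp_apply, LinearEquiv.coe_coe]
        rw [hmk, Submodule.liftQ_apply]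
      rw [← hfac]
      exact hΨ0 ψ
    obtain ⟨χ, hχ⟩ := injective_factor hI (LinearMap.lcomp R F f)
      (theta (R := R) F I (Fin n → R) s) hker
    obtain ⟨u, hu⟩ := (theta_bij_free (R := R) (F := F) (I := I) m).2 χ
    have hsu : LinearMap.rTensor (F →ₗ[R] I) f u = s := by
      apply (theta_bij_free (R := R) (F := F) (I := I) n).1
      refine LinearMap.ext fun φ => ?_
      rw [nat f u φ, hu]
      exact hχ φ
    rw [← hsu, ← LinearMap.rTensor_comp_apply]
    have hπf : π ∘ₗ f = 0 := by
      refine LinearMap.ext fun y => ?_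
      have : f y ∈ LinearMap.ker π := hf ▸ LinearMap.mem_range_self f y
      simpa using this
    rw [hπf, LinearMap.rTensor_zero, LinearMap.zero_apply]
  exact ⟨(LinearEquiv.ofBijective (theta (R := R) F I E) ⟨hinj, hsurj⟩).symm⟩
end
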